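/- Let d ≥ 2 be an integer and λ > 0, μ > 0, γ > 0, T > 0, C ≥ 0, c₁ > 0 real numbers, and define p₀ : [0,T] → ℝ by p₀(t) = -γ (1 - e^{-λ(T-t)})^d e^{-μ(T-t)} + (C/(μ+λ)) (1 - e^{-(μ+λ)(T-t)}). Then the set B = { t ∈ [0,T] : p₀(t) < -c₁ } is order-convex (for all t₁, t₂ ∈ B and t₁ ≤ t ≤ t₂ one has t ∈ B), and T ∉ B. -/

import Mathlib

/-!
Writing `s = T - t`, the derivative of `p₀` factors as `p₀'(t) = e^{-μ s} φ(e^{-λ s})` with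
`φ(x) = γ (1-x)^{d-1} ((μ + dλ) x - μ) - C x`. On `x ≤ 1` the derivative of `φ` can only turn from
positive to non-positive, so `{φ > 0}` is an interval and, the substitution `x = e^{-λ s}` being
increasing, so is `{t ≤ T : p₀'(t) > 0}`. Hence `p₀` falls, rises, falls on `(-∞, T]`; since it ends
at `p₀(T) = 0 > -c₁`, its last descent cannot reach below `-c₁`, and the sublevel set `{p₀ < -c₁}`
is an interval not containing `T`.
-/

open Set Real

section DerivSign

variable {f : ℝ → ℝ} {a b : ℝ}

theorem monotoneOn_Icc_of_deriv_nonneg (hf : Differentiable ℝ f)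
    (h : ∀ x ∈ Icc a b, 0 ≤ deriv f x) : MonotoneOn f (Icc a b) :=
  monotoneOn_of_deriv_nonneg (convex_Icc a b) hf.continuous.continuousOn hf.differentiableOn
    fun x hx => h x (interior_subset hx)

theorem antitoneOn_Icc_of_deriv_nonpos (hf : Differentiable ℝ f)
    (h : ∀ x ∈ Icc a b, deriv f x ≤ 0) : AntitoneOn f (Icc a b) :=
  antitoneOn_of_deriv_nonpos (convex_Icc a b) hf.continuous.continuousOn hf.differentiableOn
    fun x hx => h x (interior_subset hx)

theorem ordConnected_Iic_inter_pos_of_deriv_pos_of_le (hf : Differentiable ℝ f)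
    (hf' : ∀ y z, y ≤ z → z ≤ b → 0 < deriv f z → 0 < deriv f y) :
    (Iic b ∩ {x | 0 < f x}).OrdConnected := by
  refine ⟨fun x hx z hz y ⟨hxy, hyz⟩ => ⟨hyz.trans hz.1, ?_⟩⟩
  by_cases hrise : ∀ u ∈ Icc x y, 0 ≤ deriv f u
  · exact hx.2.trans_le <|
      monotoneOn_Icc_of_deriv_nonneg hf hrise (left_mem_Icc.2 hxy) (right_mem_Icc.2 hxy) hxy
  · push Not at hrise
    obtain ⟨u, hu, hu_neg⟩ := hrise
    have hfall : ∀ w ∈ Icc u z, deriv f w ≤ 0 := fun w hw =>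
      not_lt.1 fun hw_pos => hu_neg.not_gt (hf' u w hw.1 (hw.2.trans hz.1) hw_pos)
    exact hz.2.trans_le <|
      antitoneOn_Icc_of_deriv_nonpos hf hfall ⟨hu.2, hyz⟩ (right_mem_Icc.2 (hu.2.trans hyz)) hyz

theorem ordConnected_Iic_inter_lt_of_ordConnected_deriv_pos (hf : Differentiable ℝ f)
    (hf' : (Iic b ∩ {x | 0 < deriv f x}).OrdConnected) {c : ℝ} (hc : c ≤ f b) :
    (Iic b ∩ {x | f x < c}).OrdConnected := by
  refine ⟨fun t₁ ht₁ t₂ ht₂ t ⟨ht₁t, htt₂⟩ => ⟨htt₂.trans ht₂.1, ?_⟩⟩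
  by_cases hfall : ∀ u ∈ Icc t₁ t, deriv f u ≤ 0
  · exact (antitoneOn_Icc_of_deriv_nonpos hf hfall (left_mem_Icc.2 ht₁t) (right_mem_Icc.2 ht₁t)
      ht₁t).trans_lt ht₁.2
  push Not at hfall
  obtain ⟨u, hu, hu_pos⟩ := hfall
  by_cases hrise : ∀ v ∈ Icc t t₂, 0 ≤ deriv f v
  · exact (monotoneOn_Icc_of_deriv_nonneg hf hrise (left_mem_Icc.2 htt₂) (right_mem_Icc.2 htt₂)
      htt₂).trans_lt ht₂.2
  push Not at hrise
  obtain ⟨v, hv, hv_neg⟩ := hrise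
  have hfinal : ∀ w ∈ Icc v b, deriv f w ≤ 0 := fun w hw => not_lt.1 fun hw_pos =>
    hv_neg.not_gt (hf'.out ⟨hu.2.trans (hv.1.trans hw.1) |>.trans hw.2, hu_pos⟩ ⟨hw.2, hw_pos⟩
      ⟨hu.2.trans hv.1, hw.1⟩).2
  have hb_le : f b ≤ f t₂ := antitoneOn_Icc_of_deriv_nonpos hf hfinal ⟨hv.2, ht₂.1⟩
    (right_mem_Icc.2 (hv.2.trans ht₂.1)) ht₂.1
  exact absurd ((hc.trans hb_le).trans_lt ht₂.2) (lt_irrefl c)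

end DerivSign

noncomputable def costate (d : ℕ) (l μ γ T C t : ℝ) : ℝ :=
  -γ * (1 - exp (-l * (T - t))) ^ d * exp (-μ * (T - t)) +
    (C / (μ + l)) * (1 - exp (-(μ + l) * (T - t)))

-- The factor `φ` for `d = k + 2`; indexing by `k` avoids the truncated exponent `d - 1`.
noncomputable def costateDerivFactor (l μ γ C : ℝ) (k : ℕ) (x : ℝ) : ℝ :=
  γ * (1 - x) ^ (k + 1) * ((μ + (k + 2) * l) * x - μ) - C * x

section CostateDerivFactor

variable {l μ γ C : ℝ} {k : ℕ}

theorem hasDerivAt_costateDerivFactor (x : ℝ) :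
    HasDerivAt (costateDerivFactor l μ γ C k)
      (γ * (k + 2) * (1 - x) ^ k * ((μ + l) - (μ + (k + 2) * l) * x) - C) x := by
  have hpow : HasDerivAt (fun x : ℝ => (1 - x) ^ (k + 1)) ((k + 1 : ℕ) * (1 - x) ^ k * (-1)) x := by
    simpa using ((hasDerivAt_id x).const_sub 1).fun_pow (k + 1)
  have hlin : HasDerivAt (fun x : ℝ => (μ + (k + 2) * l) * x - μ) (μ + (k + 2) * l) x := by
    simpa using ((hasDerivAt_id x).const_mul (μ + (k + 2) * l)).sub_const μ
  refine (((hpow.const_mul γ).fun_mul hlin).sub ((hasDerivAt_id x).const_mul C)).congr_deriv ?_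
  push_cast
  ring

theorem differentiable_costateDerivFactor : Differentiable ℝ (costateDerivFactor l μ γ C k) :=
  fun x => (hasDerivAt_costateDerivFactor x).differentiableAt

/-- For `x ≤ 1` both factors of `(1 - x) ^ k * ((μ + l) - (μ + (k + 2) * l) * x)` are
nonnegative and antitone as soon as the second one is positive. -/
theorem deriv_costateDerivFactor_pos_of_le (hγ : 0 ≤ γ) (hC : 0 ≤ C)
    (hA : 0 ≤ μ + (k + 2) * l) {y z : ℝ} (hyz : y ≤ z) (hz : z ≤ 1)
    (h : 0 < deriv (costateDerivFactor l μ γ C k) z) :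
    0 < deriv (costateDerivFactor l μ γ C k) y := by
  rw [(hasDerivAt_costateDerivFactor z).deriv] at h
  rw [(hasDerivAt_costateDerivFactor y).deriv]
  set A := μ + (k + 2) * l
  have hpow : (1 - z) ^ k ≤ (1 - y) ^ k := pow_le_pow_left₀ (by linarith) (by linarith) k
  have hlin : 0 < (μ + l) - A * z := by
    by_contra! hle
    have : γ * (k + 2) * (1 - z) ^ k * ((μ + l) - A * z) ≤ 0 :=
      mul_nonpos_of_nonneg_of_nonpos (by have := pow_nonneg (sub_nonneg.2 hz) k; positivity) hle
    linarith
  have hprod : (1 - z) ^ k * ((μ + l) - A * z) ≤ (1 - y) ^ k * ((μ + l) - A * y) :=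
    mul_le_mul hpow (by nlinarith) hlin.le ((pow_nonneg (sub_nonneg.2 hz) k).trans hpow)
  nlinarith [mul_le_mul_of_nonneg_left hprod (by positivity : (0 : ℝ) ≤ γ * (k + 2))]

end CostateDerivFactor

section Costate

variable {l μ γ T C : ℝ} {k : ℕ}

theorem hasDerivAt_exp_neg_mul_sub (a T t : ℝ) :
    HasDerivAt (fun t => exp (-a * (T - t))) (exp (-a * (T - t)) * a) t := by
  simpa using (((hasDerivAt_id t).const_sub T).const_mul (-a)).exp

theorem hasDerivAt_costate (hμl : μ + l ≠ 0) (t : ℝ) :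
    HasDerivAt (costate (k + 2) l μ γ T C)
      (exp (-μ * (T - t)) * costateDerivFactor l μ γ C k (exp (-l * (T - t)))) t := by
  have hE := hasDerivAt_exp_neg_mul_sub l T t
  have hM := hasDerivAt_exp_neg_mul_sub μ T t
  have hEM := hasDerivAt_exp_neg_mul_sub (μ + l) T t
  refine (((((hE.const_sub 1).fun_pow (k + 2)).const_mul (-γ)).fun_mul hM).add
    ((hEM.const_sub 1).const_mul (C / (μ + l)))).congr_deriv ?_
  have hsplit : exp (-(μ + l) * (T - t)) = exp (-l * (T - t)) * exp (-μ * (T - t)) := by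
    rw [← exp_add]
    ring_nf
  rw [hsplit, costateDerivFactor, show k + 2 - 1 = k + 1 by omega]
  push_cast
  field_simp
  ring

theorem costate_self {d : ℕ} (hd : d ≠ 0) : costate d l μ γ T C T = 0 := by
  simp [costate, hd]

theorem ordConnected_Iic_inter_deriv_costate_pos (hl : 0 < l) (hμ : 0 < μ) (hγ : 0 ≤ γ)
    (hC : 0 ≤ C) : (Iic T ∩ {t | 0 < deriv (costate (k + 2) l μ γ T C) t}).OrdConnected := by
  have hE : Monotone fun t => exp (-l * (T - t)) := fun s t hst => exp_le_exp.2 (by nlinarith)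
  have hφ : (Iic 1 ∩ {x | 0 < costateDerivFactor l μ γ C k x}).OrdConnected :=
    ordConnected_Iic_inter_pos_of_deriv_pos_of_le differentiable_costateDerivFactor
      fun _ _ => deriv_costateDerivFactor_pos_of_le hγ hC (by positivity)
  convert hφ.preimage_mono hE using 1
  ext t
  have hμl : μ + l ≠ 0 := by positivity
  have hderiv : deriv (costate (k + 2) l μ γ T C) t = _ := (hasDerivAt_costate hμl t).deriv
  simp only [mem_preimage, mem_inter_iff, mem_Iic, mem_ofPred_eq, hderiv,
    mul_pos_iff_of_pos_left (exp_pos _), exp_le_one_iff, neg_mul, neg_nonpos,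
    mul_nonneg_iff_of_pos_left hl, sub_nonneg]

end Costate

theorem activation_set_is_interval_general
    (d : ℕ) (hd : 2 ≤ d) (l μ γ T C c₁ : ℝ)
    (hl : 0 < l) (hμ : 0 < μ) (hγ : 0 < γ) (hC : 0 ≤ C) (hc₁ : 0 < c₁)
    (p₀ : ℝ → ℝ)
    (hp : ∀ t : ℝ, p₀ t =
      -γ * (1 - Real.exp (-l * (T - t))) ^ d * Real.exp (-μ * (T - t)) +
        (C / (μ + l)) * (1 - Real.exp (-(μ + l) * (T - t))))
    (B : Set ℝ) (hB : B = {t ∈ Set.Icc (0 : ℝ) T | p₀ t < -c₁}) :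
    (∀ t₁ ∈ B, ∀ t₂ ∈ B, ∀ t : ℝ, t₁ ≤ t → t ≤ t₂ → t ∈ B) ∧ T ∉ B := by
  obtain ⟨k, rfl⟩ : ∃ k, d = k + 2 := ⟨d - 2, by omega⟩
  obtain rfl : p₀ = costate (k + 2) l μ γ T C := funext hp
  have hp₀T : costate (k + 2) l μ γ T C T = 0 := costate_self (by omega)
  have hB_eq : B = Ici 0 ∩ (Iic T ∩ {t | costate (k + 2) l μ γ T C t < -c₁}) := by
    ext
    simp [hB, and_assoc]
  have hB_conn : B.OrdConnected := hB_eq ▸ ordConnected_Ici.inter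
    (ordConnected_Iic_inter_lt_of_ordConnected_deriv_pos
      (fun t => (hasDerivAt_costate (by positivity) t).differentiableAt)
      (ordConnected_Iic_inter_deriv_costate_pos hl hμ hγ.le hC) (by linarith))
  exact ⟨fun t₁ h₁ t₂ h₂ t ht₁ ht₂ => hB_conn.out h₁ h₂ ⟨ht₁, ht₂⟩,
    fun hT => by simp [hB, hp₀T] at hT; linarith⟩

/-- Threshold structure of the optimal activation set: the set
`B = {t ∈ [0,T] : p₀(t) < -c₁}` is order-convex and does not contain `T`,
where `p₀` is the closed-form costate variable. -/
theorem activation_set_is_interval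
    (d : ℕ) (hd : 2 ≤ d) (l μ γ T C c₁ : ℝ)
    (hl : 0 < l) (hμ : 0 < μ) (hγ : 0 < γ) (hT : 0 < T) (hC : 0 ≤ C) (hc₁ : 0 < c₁)
    (p₀ : ℝ → ℝ)
    (hp : ∀ t : ℝ, p₀ t =
      -γ * (1 - Real.exp (-l * (T - t))) ^ d * Real.exp (-μ * (T - t)) +
        (C / (μ + l)) * (1 - Real.exp (-(μ + l) * (T - t))))
    (B : Set ℝ) (hB : B = {t ∈ Set.Icc (0 : ℝ) T | p₀ t < -c₁}) :
    (∀ t₁ ∈ B, ∀ t₂ ∈ B, ∀ t : ℝ, t₁ ≤ t → t ≤ t₂ → t ∈ B) ∧ T ∉ B :=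
  activation_set_is_interval_general d hd l μ γ T C c₁ hl hμ hγ hC hc₁ p₀ hp B hB
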